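/- Bregman iteration applied to an eigenfunction recovers it in finitely many steps: if λf ∈ ∂R(f) for a convex one-homogeneous functional R with λ < λ', then the Bregman iterates u^{k+1} = argmin_u (λ'/2)‖u−f‖² + R(u) − ⟨p^k, u⟩ with p^0 = 0, p^k ∈ ∂R(u^k), satisfy u^k = f for all k ≥ ⌈λ'/(λ'−λ)⌉ (exact reconstruction after finitely many iterations). -/

import Mathlib

/-!
For a positively one-homogeneous `J`, a subgradient `q ∈ ∂J(f)` satisfies `J f = ⟪q, f⟫` and
`⟪q, ·⟫ ≤ J`, so it is also a subgradient at every `c • f` with `c ≥ 0`. A point `v` at which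
`p + λ' (f - v) ∈ ∂J(v)` is the unique minimizer of `(λ'/2)‖· - f‖² + J - ⟪p, ·⟫`, since that
objective exceeds its value at `v` by at least `(λ'/2)‖· - v‖²`. Hence the first Bregman step
returns `(1 - λ/λ') f` with `p¹ = λ f ∈ ∂J(f)`, and from then on every step returns `f` and
keeps `p = λ f`. As `λ'/(λ' - λ) > 1`, exact recovery already holds from step `2` on.
-/

open scoped RealInnerProductSpace

section Subgradient

variable {H : Type*} [NormedAddCommGroup H] [InnerProductSpace ℝ H]

def HasSubgradientAt (J : H → ℝ) (q x : H) : Prop :=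
  ∀ w : H, J x + ⟪q, w - x⟫ ≤ J w

section Homogeneous

variable {J : H → ℝ} (hJ : ∀ c : ℝ, 0 ≤ c → ∀ u : H, J (c • u) = c * J u) {q f : H}
include hJ

theorem HasSubgradientAt.apply_eq_inner (hq : HasSubgradientAt J q f) : J f = ⟪q, f⟫ := by
  have hJ0 : J 0 = 0 := by simpa using hJ 0 le_rfl 0
  have h0 := hq 0
  have h2 := hq ((2 : ℝ) • f)
  rw [hJ0, zero_sub, inner_neg_right] at h0
  rw [hJ 2 zero_le_two, two_smul, add_sub_cancel_right] at h2
  linarith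

theorem HasSubgradientAt.inner_le (hq : HasSubgradientAt J q f) (w : H) : ⟪q, w⟫ ≤ J w := by
  have h := hq w
  rw [inner_sub_right, hq.apply_eq_inner hJ] at h
  linarith

theorem HasSubgradientAt.smul_of_nonneg (hq : HasSubgradientAt J q f) {c : ℝ} (hc : 0 ≤ c) :
    HasSubgradientAt J q (c • f) := by
  intro w
  rw [hJ c hc, inner_sub_right, real_inner_smul_right, ← hq.apply_eq_inner hJ]
  linarith [hq.inner_le hJ w]

end Homogeneous

section ProximalObjective

variable (J : H → ℝ) (μ : ℝ) (f p : H)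

noncomputable def proximalObjective (w : H) : ℝ :=
  μ / 2 * ‖w - f‖ ^ 2 + J w - ⟪p, w⟫

variable {J μ f p} {v : H}

theorem proximalObjective_add_le_of_hasSubgradientAt
    (hv : HasSubgradientAt J (p + μ • (f - v)) v) (w : H) :
    proximalObjective J μ f p v + μ / 2 * ‖w - v‖ ^ 2 ≤ proximalObjective J μ f p w := by
  have hexpand : ‖w - f‖ ^ 2 = ‖w - v‖ ^ 2 + 2 * ⟪v - f, w - v⟫ + ‖v - f‖ ^ 2 := by
    rw [show w - f = (w - v) + (v - f) by abel, norm_add_sq_real, real_inner_comm]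
  have h := hv w
  rw [inner_add_left, real_inner_smul_left, ← neg_sub v f, inner_neg_left, inner_sub_right p] at h
  simp only [proximalObjective]
  rw [hexpand]
  linarith

theorem eq_of_proximalObjective_le (hμ : 0 < μ) (hv : HasSubgradientAt J (p + μ • (f - v)) v)
    {u : H} (hu : proximalObjective J μ f p u ≤ proximalObjective J μ f p v) : u = v := by
  have h := proximalObjective_add_le_of_hasSubgradientAt hv u
  have hsq : ‖u - v‖ ^ 2 ≤ 0 := by nlinarith
  rw [← sub_eq_zero, ← norm_eq_zero]
  exact pow_eq_zero_iff two_ne_zero |>.mp (le_antisymm hsq (sq_nonneg _))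

end ProximalObjective

end Subgradient

theorem two_le_ceil_div_sub {a b : ℝ} (ha : 0 < a) (hab : a < b) : (2 : ℤ) ≤ ⌈b / (b - a)⌉ := by
  have h : ((1 : ℤ) : ℝ) < b / (b - a) := by
    rw [Int.cast_one, one_lt_div (sub_pos.mpr hab)]
    linarith
  have := Int.lt_ceil.mpr h
  omega

theorem smul_sub_one_sub_div_smul {E : Type*} [AddCommGroup E] [Module ℝ E] {a b : ℝ}
    (hb : b ≠ 0) (x : E) : b • (x - (1 - a / b) • x) = a • x := by
  rw [sub_smul, one_smul, sub_sub_cancel, smul_smul, mul_div_cancel₀ a hb]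

theorem bregman_finite_exact_recovery_general {H : Type*} [NormedAddCommGroup H]
    [InnerProductSpace ℝ H]
    (J : H → ℝ)
    (hJhom : ∀ (c : ℝ), 0 ≤ c → ∀ u : H, J (c • u) = c * J u)
    (f : H) (lam lam' : ℝ) (hlam : 0 < lam) (hll : lam < lam')
    (hEig : ∀ w : H, J f + ⟪lam • f, w - f⟫ ≤ J w)
    (u p : ℕ → H) (hp0 : p 0 = 0)
    (hpupd : ∀ k : ℕ, p (k + 1) = p k + lam' • (f - u (k + 1)))
    (hmin : ∀ k : ℕ, ∀ w : H,
      lam' / 2 * ‖u (k + 1) - f‖ ^ 2 + J (u (k + 1)) - ⟪p k, u (k + 1)⟫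
        ≤ lam' / 2 * ‖w - f‖ ^ 2 + J w - ⟪p k, w⟫) :
    ∀ k : ℕ, (⌈lam' / (lam' - lam)⌉ : ℤ) ≤ (k : ℤ) → u k = f := by
  have hlam' : 0 < lam' := hlam.trans hll
  have hsub : HasSubgradientAt J (lam • f) f := hEig
  set c := 1 - lam / lam'
  have hstep : lam' • (f - c • f) = lam • f := smul_sub_one_sub_div_smul hlam'.ne' f
  have hu1 : u 1 = c • f := by
    have hc : 0 ≤ c := sub_nonneg.mpr ((div_le_one hlam').mpr hll.le)
    refine eq_of_proximalObjective_le hlam' ?_ (hmin 0 (c • f))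
    rw [hp0, zero_add, hstep]
    exact hsub.smul_of_nonneg hJhom hc
  have hfixed : ∀ k, p k = lam • f → u (k + 1) = f ∧ p (k + 1) = lam • f := by
    intro k hpk
    have huf : u (k + 1) = f :=
      eq_of_proximalObjective_le hlam' (by rwa [hpk, sub_self, smul_zero, add_zero])
        (hmin k f)
    exact ⟨huf, by rw [hpupd, huf, sub_self, smul_zero, add_zero, hpk]⟩
  have hp : ∀ n, p (n + 1) = lam • f := by
    intro n
    induction n with
    | zero => rw [hpupd, hp0, zero_add, hu1, hstep]
    | succ n ih => exact (hfixed (n + 1) ih).2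
  intro k hk
  have hceil := two_le_ceil_div_sub hlam hll
  obtain ⟨n, rfl⟩ : ∃ n, k = n + 2 := ⟨k - 2, by omega⟩
  exact (hfixed (n + 1) (hp n)).1

/-- Bregman iteration recovers an eigenfunction exactly after
finitely many steps: if `λ f ∈ ∂J(f)` with `0 < λ < λ'` for a convex,
nonnegative, positively one-homogeneous `J`, and `u (k+1)` minimizes the
Bregman objective `(λ'/2)‖·-f‖² + J - ⟪p k, ·⟫` with `p 0 = 0` and
`p (k+1) = p k + λ'(f - u (k+1))`, then `u k = f` for all
`k ≥ ⌈λ'/(λ'-λ)⌉`. -/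
theorem bregman_finite_exact_recovery {H : Type*} [NormedAddCommGroup H]
    [InnerProductSpace ℝ H]
    (J : H → ℝ) (hJconv : ConvexOn ℝ Set.univ J)
    (hJhom : ∀ (c : ℝ), 0 ≤ c → ∀ u : H, J (c • u) = c * J u)
    (hJnonneg : ∀ u : H, 0 ≤ J u)
    (f : H) (lam lam' : ℝ) (hlam : 0 < lam) (hll : lam < lam')
    (hEig : ∀ w : H, J f + ⟪lam • f, w - f⟫ ≤ J w)
    (u p : ℕ → H) (hu0 : u 0 = 0) (hp0 : p 0 = 0)
    (hpupd : ∀ k : ℕ, p (k + 1) = p k + lam' • (f - u (k + 1)))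
    (hmin : ∀ k : ℕ, ∀ w : H,
      lam' / 2 * ‖u (k + 1) - f‖ ^ 2 + J (u (k + 1)) - ⟪p k, u (k + 1)⟫
        ≤ lam' / 2 * ‖w - f‖ ^ 2 + J w - ⟪p k, w⟫) :
    ∀ k : ℕ, (⌈lam' / (lam' - lam)⌉ : ℤ) ≤ (k : ℤ) → u k = f :=
  bregman_finite_exact_recovery_general J hJhom f lam lam' hlam hll hEig u p hp0 hpupd hmin
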